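/- Let x ∈ ℂ^{n₁×n₂} whose 2D DFT never vanishes, with gcd(s₁,n₁) = 1 and gcd(s₂,n₂) = 1 (no condition relating n₁ and n₂). Then x is uniquely determined up to global phase by the 5n₁n₂ measurements |Fx|² together with |F(x + 𝒟^{(s₁,0)}x)|², |F(x − i𝒟^{(s₁,0)}x)|², |F(x + 𝒟^{(0,s₂)}x)|², |F(x − i𝒟^{(0,s₂)}x)|². -/

import Mathlib

/-!
The transforms `X = F x` and `Y = F y` have equal moduli. The modulation `𝒟^e` shifts the
spectrum by `e`, so by polarization its two measurements give
`Y k * conj (Y (k - e)) = X k * conj (X (k - e))`; as `X` never vanishes, the unimodular ratio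
`Y / X` is invariant under the shifts `e = (s₁, 0)` and `e = (0, s₂)`. These generate
`ZMod n₁ × ZMod n₂`, so `Y = c X` for one constant `c`, and `y = c x` since `F` is injective.
-/

noncomputable def dft2 {n₁ n₂ : ℕ} [NeZero n₁] [NeZero n₂]
    (x : ZMod n₁ × ZMod n₂ → ℂ) (k : ZMod n₁ × ZMod n₂) : ℂ :=
  (Real.sqrt (n₁ * n₂))⁻¹ * ∑ t : ZMod n₁ × ZMod n₂,
    x t * Complex.exp (-(2 * Real.pi * Complex.I) *
      ((k.1.val : ℂ) * (t.1.val : ℂ) / n₁ + (k.2.val : ℂ) * (t.2.val : ℂ) / n₂))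

noncomputable def modulate2 {n₁ n₂ : ℕ} [NeZero n₁] [NeZero n₂] (s₁ s₂ : ℤ)
    (x : ZMod n₁ × ZMod n₂ → ℂ) : ZMod n₁ × ZMod n₂ → ℂ :=
  fun t => Complex.exp (2 * Real.pi * Complex.I *
      ((s₁ : ℂ) * (t.1.val : ℂ) / n₁ + (s₂ : ℂ) * (t.2.val : ℂ) / n₂)) * x t

open Complex ComplexConjugate ZMod

lemma exp_two_pi_I_mul_val_div_eq_stdAddChar (n : ℕ) [NeZero n] (m : ℤ) (j : ZMod n) :
    exp (2 * Real.pi * I * ((m : ℂ) * (j.val : ℂ) / n)) = stdAddChar ((m : ZMod n) * j) := by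
  have hcast : ((m * j.val : ℤ) : ZMod n) = (m : ZMod n) * j := by
    push_cast
    rw [natCast_zmod_val]
  rw [← hcast, stdAddChar_coe]
  push_cast
  ring_nf

lemma isUnit_intCast_of_gcd_eq_one {n : ℕ} {s : ℤ} (hs : Int.gcd s n = 1) :
    IsUnit (s : ZMod n) :=
  (coe_int_isUnit_iff_isCoprime s n).mpr (isCoprime_comm.mp (Int.isCoprime_iff_gcd_eq_one.mpr hs))

lemma Function.Periodic.eq_apply_zero_of_isUnit {α : Type*} {n : ℕ} {f : ZMod n → α} {s : ZMod n}
    (hf : Function.Periodic f s) (hs : IsUnit s) (a : ZMod n) : f a = f 0 := by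
  obtain ⟨u, rfl⟩ := hs
  have ha : (cast (a * ((u⁻¹ : (ZMod n)ˣ) : ZMod n)) : ℤ) • (u : ZMod n) = a := by
    rw [zsmul_eq_mul, intCast_zmod_cast, Units.inv_mul_cancel_right]
  rw [← ha, hf.zsmul_eq]

lemma Function.Periodic.eq_apply_zero_of_isUnit_prod {α : Type*} {n₁ n₂ : ℕ}
    {f : ZMod n₁ × ZMod n₂ → α} {s₁ : ZMod n₁} {s₂ : ZMod n₂}
    (hf₁ : Function.Periodic f (s₁, 0)) (hf₂ : Function.Periodic f (0, s₂))
    (hs₁ : IsUnit s₁) (hs₂ : IsUnit s₂) (k : ZMod n₁ × ZMod n₂) : f k = f 0 := by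
  have hper₁ : Function.Periodic (fun a => f (a, k.2)) s₁ := fun a => by
    simpa using hf₁ (a, k.2)
  have hper₂ : Function.Periodic (fun b => f (0, b)) s₂ := fun b => by
    simpa using hf₂ (0, b)
  exact (hper₁.eq_apply_zero_of_isUnit hs₁ k.1).trans (hper₂.eq_apply_zero_of_isUnit hs₂ k.2)

lemma normSq_eq_of_norm_eq {z w : ℂ} (h : ‖z‖ = ‖w‖) : normSq z = normSq w := by
  rw [normSq_eq_norm_sq, normSq_eq_norm_sq, h]

lemma mul_conj_eq_of_norm_eq {u v u' v' : ℂ} (hu : ‖u'‖ = ‖u‖) (hv : ‖v'‖ = ‖v‖)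
    (hadd : ‖u' + v'‖ = ‖u + v‖) (hsub : ‖u' - I * v'‖ = ‖u - I * v‖) :
    u' * conj v' = u * conj v := by
  have hre := normSq_eq_of_norm_eq hadd
  have him := normSq_eq_of_norm_eq hsub
  have hI : ∀ z w : ℂ, (z * conj (I * w)).re = (z * conj w).im := fun z w => by
    simp only [map_mul, conj_I, mul_re, mul_im, neg_re, neg_im, I_re, I_im]
    ring
  rw [normSq_add, normSq_add, normSq_eq_of_norm_eq hu, normSq_eq_of_norm_eq hv] at hre
  rw [normSq_sub, normSq_sub, normSq_eq_of_norm_eq hu, normSq_mul, normSq_mul,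
    normSq_eq_of_norm_eq hv, hI, hI] at him
  apply Complex.ext <;> linarith

lemma div_eq_div_of_mul_conj_eq {u v u' v' : ℂ} (hu : u ≠ 0) (hv : v ≠ 0) (hv' : ‖v'‖ = ‖v‖)
    (h : u' * conj v' = u * conj v) : u' / u = v' / v := by
  have hvv : v' * conj v' = v * conj v := by
    rw [mul_conj, mul_conj, normSq_eq_of_norm_eq hv']
  have hv0 : v * conj v ≠ 0 := mul_ne_zero hv ((map_ne_zero _).mpr hv)
  rw [div_eq_div_iff hu hv]
  apply mul_right_cancel₀ hv0
  linear_combination (v * v') * h - (u' * v) * hvv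

section DFT2

variable {n₁ n₂ : ℕ} [NeZero n₁] [NeZero n₂]

lemma dft2_eq_sum_stdAddChar (x : ZMod n₁ × ZMod n₂ → ℂ) (k : ZMod n₁ × ZMod n₂) :
    dft2 x k = (Real.sqrt (n₁ * n₂))⁻¹ * ∑ t : ZMod n₁ × ZMod n₂,
      stdAddChar (-(k.1 * t.1)) * stdAddChar (-(k.2 * t.2)) * x t := by
  simp only [dft2]
  congr 1
  refine Finset.sum_congr rfl fun t _ => ?_
  have hexp : ∀ (n : ℕ) [NeZero n] (a b : ZMod n),
      -(2 * Real.pi * I) * ((a.val : ℂ) * (b.val : ℂ) / n) =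
        2 * Real.pi * I * (((-(a.val : ℤ) : ℤ) : ℂ) * (b.val : ℂ) / n) := fun n _ a b => by
    push_cast; ring
  rw [mul_add, exp_add, hexp, hexp, exp_two_pi_I_mul_val_div_eq_stdAddChar,
    exp_two_pi_I_mul_val_div_eq_stdAddChar]
  push_cast
  simp only [natCast_zmod_val]
  ring_nf

lemma modulate2_apply (s₁ s₂ : ℤ) (x : ZMod n₁ × ZMod n₂ → ℂ) (t : ZMod n₁ × ZMod n₂) :
    modulate2 s₁ s₂ x t =
      stdAddChar ((s₁ : ZMod n₁) * t.1) * stdAddChar ((s₂ : ZMod n₂) * t.2) * x t := by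
  rw [modulate2, mul_add, exp_add, exp_two_pi_I_mul_val_div_eq_stdAddChar,
    exp_two_pi_I_mul_val_div_eq_stdAddChar]

lemma dft2_modulate2 (s₁ s₂ : ℤ) (x : ZMod n₁ × ZMod n₂ → ℂ) (k : ZMod n₁ × ZMod n₂) :
    dft2 (modulate2 s₁ s₂ x) k = dft2 x (k - ((s₁ : ZMod n₁), (s₂ : ZMod n₂))) := by
  simp only [dft2_eq_sum_stdAddChar, modulate2_apply, Prod.fst_sub, Prod.snd_sub]
  congr 1
  refine Finset.sum_congr rfl fun t _ => ?_
  rw [show -((k.1 - s₁) * t.1) = -(k.1 * t.1) + s₁ * t.1 by ring,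
    show -((k.2 - s₂) * t.2) = -(k.2 * t.2) + s₂ * t.2 by ring,
    AddChar.map_add_eq_mul, AddChar.map_add_eq_mul]
  ring

lemma dft2_eq_dft_dft (x : ZMod n₁ × ZMod n₂ → ℂ) (k : ZMod n₁ × ZMod n₂) :
    dft2 x k = (Real.sqrt (n₁ * n₂))⁻¹ * 𝓕 (fun t₁ => 𝓕 (fun t₂ => x (t₁, t₂)) k.2) k.1 := by
  simp only [dft2_eq_sum_stdAddChar, dft_apply, smul_eq_mul, Fintype.sum_prod_type, Finset.mul_sum]
  ring_nf

lemma dft2_injective : Function.Injective (dft2 : (ZMod n₁ × ZMod n₂ → ℂ) → _) := by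
  intro x y h
  have hc : (((Real.sqrt (n₁ * n₂))⁻¹ : ℝ) : ℂ) ≠ 0 := by
    have := NeZero.pos n₁
    have := NeZero.pos n₂
    exact_mod_cast inv_ne_zero (Real.sqrt_pos.mpr (by positivity)).ne'
  have hrows : ∀ k₂, (fun t₁ => 𝓕 (fun t₂ => x (t₁, t₂)) k₂) =
      fun t₁ => 𝓕 (fun t₂ => y (t₁, t₂)) k₂ :=
    fun k₂ => dft.injective <| funext fun k₁ => mul_left_cancel₀ hc <| by
      simpa only [dft2_eq_dft_dft] using congrFun h (k₁, k₂)
  funext t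
  exact congrFun (dft.injective (funext fun k₂ => congrFun (hrows k₂) t.1)) t.2

lemma dft2_add (f g : ZMod n₁ × ZMod n₂ → ℂ) (k : ZMod n₁ × ZMod n₂) :
    dft2 (fun t => f t + g t) k = dft2 f k + dft2 g k := by
  simp only [dft2, add_mul, Finset.sum_add_distrib, mul_add]

lemma dft2_sub (f g : ZMod n₁ × ZMod n₂ → ℂ) (k : ZMod n₁ × ZMod n₂) :
    dft2 (fun t => f t - g t) k = dft2 f k - dft2 g k := by
  simp only [dft2, sub_mul, Finset.sum_sub_distrib, mul_sub]

lemma dft2_const_mul (c : ℂ) (f : ZMod n₁ × ZMod n₂ → ℂ) (k : ZMod n₁ × ZMod n₂) :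
    dft2 (fun t => c * f t) k = c * dft2 f k := by
  simp only [dft2, mul_assoc, ← Finset.mul_sum]
  ring

lemma periodic_dft2_div_of_norm_eq (a b : ℤ) {x y : ZMod n₁ × ZMod n₂ → ℂ}
    (hx : ∀ k, dft2 x k ≠ 0) (h1 : ∀ k, ‖dft2 y k‖ = ‖dft2 x k‖)
    (hadd : ∀ k, ‖dft2 (fun t => y t + modulate2 a b y t) k‖ =
      ‖dft2 (fun t => x t + modulate2 a b x t) k‖)
    (hsub : ∀ k, ‖dft2 (fun t => y t - I * modulate2 a b y t) k‖ =
      ‖dft2 (fun t => x t - I * modulate2 a b x t) k‖) :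
    Function.Periodic (fun k => dft2 y k / dft2 x k) ((a : ZMod n₁), (b : ZMod n₂)) := by
  intro k
  set e : ZMod n₁ × ZMod n₂ := ((a : ZMod n₁), (b : ZMod n₂))
  have hshift : ∀ w : ZMod n₁ × ZMod n₂ → ℂ, dft2 (modulate2 a b w) (k + e) = dft2 w k :=
    fun w => by rw [dft2_modulate2, add_sub_cancel_right]
  have hpol := mul_conj_eq_of_norm_eq (h1 (k + e)) (h1 k)
    (by simpa only [dft2_add, hshift] using hadd (k + e))
    (by simpa only [dft2_sub, dft2_const_mul, hshift] using hsub (k + e))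
  exact div_eq_div_of_mul_conj_eq (hx _) (hx k) (h1 k) hpol

end DFT2

theorem phase_retrieval_2D_five (n₁ n₂ : ℕ) [NeZero n₁] [NeZero n₂] (s₁ s₂ : ℤ)
    (hs₁ : Int.gcd s₁ n₁ = 1) (hs₂ : Int.gcd s₂ n₂ = 1)
    (x y : ZMod n₁ × ZMod n₂ → ℂ) (hx : ∀ k, dft2 x k ≠ 0)
    (h1 : ∀ k, Norm.norm (dft2 y k) = Norm.norm (dft2 x k))
    (h2 : ∀ k, Norm.norm (dft2 (fun t => y t + modulate2 s₁ 0 y t) k) =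
               Norm.norm (dft2 (fun t => x t + modulate2 s₁ 0 x t) k))
    (h3 : ∀ k, Norm.norm (dft2 (fun t => y t - Complex.I * modulate2 s₁ 0 y t) k) =
               Norm.norm (dft2 (fun t => x t - Complex.I * modulate2 s₁ 0 x t) k))
    (h4 : ∀ k, Norm.norm (dft2 (fun t => y t + modulate2 0 s₂ y t) k) =
               Norm.norm (dft2 (fun t => x t + modulate2 0 s₂ x t) k))
    (h5 : ∀ k, Norm.norm (dft2 (fun t => y t - Complex.I * modulate2 0 s₂ y t) k) =
               Norm.norm (dft2 (fun t => x t - Complex.I * modulate2 0 s₂ x t) k)) :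
    ∃ c : ℂ, Norm.norm c = 1 ∧ y = fun t => c * x t := by
  have hper₁ := periodic_dft2_div_of_norm_eq s₁ 0 hx h1 h2 h3
  have hper₂ := periodic_dft2_div_of_norm_eq 0 s₂ hx h1 h4 h5
  rw [Int.cast_zero] at hper₁ hper₂
  have hconst : ∀ k, dft2 y k / dft2 x k = dft2 y 0 / dft2 x 0 :=
    hper₁.eq_apply_zero_of_isUnit_prod hper₂ (isUnit_intCast_of_gcd_eq_one hs₁)
      (isUnit_intCast_of_gcd_eq_one hs₂)
  refine ⟨dft2 y 0 / dft2 x 0, ?_, dft2_injective (funext fun k => ?_)⟩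
  · rw [norm_div, h1, div_self (norm_ne_zero_iff.mpr (hx 0))]
  · rw [dft2_const_mul, ← hconst k, div_mul_cancel₀ _ (hx k)]
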